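/- Let μ be a probability measure on the positive reals with finite second moment and positive mean, and let v > 0. Then the excess kurtosis of the one-dimensional Gaussian scale mixture GSM(μ, v) is nonnegative, i.e. Gaussian scale mixtures are never platykurtic; it is zero if and only if the mixing distribution μ is a Dirac point mass (equivalently, Var_μ(z) = 0). -/

import Mathlib

open MeasureTheory ProbabilityTheory

/-- The one-dimensional Gaussian scale mixture with mixing distribution `μ` and base
variance `v`: the measure obtained by binding `μ` with `z ↦ N(0, z·v)`. -/
noncomputable def GSM (μ : Measure ℝ) (v : ℝ) : Measure ℝ :=
  μ.bind (fun z => (gaussianReal 0 (z * v).toNNReal : Measure ℝ))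

/-- Excess kurtosis of a probability measure on `ℝ`: the fourth central moment divided
by the squared variance, minus 3. -/
noncomputable def kurt (ν : Measure ℝ) : ℝ :=
  centralMoment id 4 ν / (variance id ν) ^ 2 - 3

/-!
Conditionally on the scale `z`, the mixture is `N(0, z v)`, whose second and fourth moments are
`z v` and `3 (z v)²`. Integrating over `μ` gives `E X² = v E z` and `E X⁴ = 3 v² E z²`, while
`E X = 0` by symmetry. Hence the excess kurtosis is `3 E z² / (E z)² - 3 = 3 Var z / (E z)²`,
which is nonnegative and vanishes exactly when `z` is almost surely constant.
-/

open Real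
open scoped NNReal

section GaussianMoments

lemma deriv_mul_exp_mul_sq_div_two (a : ℝ) {p p' : ℝ → ℝ} (hp : ∀ t, HasDerivAt p (p' t) t) :
    deriv (fun t => p t * rexp (a * t ^ 2 / 2)) =
      fun t => (p' t + a * t * p t) * rexp (a * t ^ 2 / 2) := by
  funext t
  have hexp : HasDerivAt (fun t => rexp (a * t ^ 2 / 2)) (rexp (a * t ^ 2 / 2) * (a * t)) t := by
    convert (((hasDerivAt_pow 2 t).const_mul a).div_const 2).exp using 1
    push_cast
    ring
  rw [((hp t).fun_mul hexp).deriv]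
  ring

lemma integral_sq_gaussianReal_zero (w : ℝ≥0) : ∫ x, x ^ 2 ∂gaussianReal 0 w = w := by
  rw [← variance_of_integral_eq_zero measurable_id'.aemeasurable integral_id_gaussianReal,
    variance_fun_id_gaussianReal]

lemma integral_pow_four_gaussianReal_zero (w : ℝ≥0) :
    ∫ x, x ^ 4 ∂gaussianReal 0 w = 3 * (w : ℝ) ^ 2 := by
  -- the fourth moment is the fourth derivative at `0` of the mgf `t ↦ exp (w t² / 2)`
  have hmgf := iteratedDeriv_mgf_zero (X := id) (μ := gaussianReal 0 w) (by simp) 4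
  rw [mgf_id_gaussianReal] at hmgf
  simp only [iteratedDeriv_succ', iteratedDeriv_zero, zero_mul, zero_add] at hmgf
  set a : ℝ := (w : ℝ)
  have d1 : deriv (fun t => rexp (a * t ^ 2 / 2)) = fun t => (a * t) * rexp (a * t ^ 2 / 2) := by
    simpa using deriv_mul_exp_mul_sq_div_two a (fun t => hasDerivAt_const t (1 : ℝ))
  have d2 : deriv (fun t => (a * t) * rexp (a * t ^ 2 / 2)) =
      fun t => (a + a ^ 2 * t ^ 2) * rexp (a * t ^ 2 / 2) := by
    rw [deriv_mul_exp_mul_sq_div_two a (fun t => by simpa using (hasDerivAt_id t).const_mul a)]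
    funext t
    ring
  have d3 : deriv (fun t => (a + a ^ 2 * t ^ 2) * rexp (a * t ^ 2 / 2)) =
      fun t => (3 * a ^ 2 * t + a ^ 3 * t ^ 3) * rexp (a * t ^ 2 / 2) := by
    rw [deriv_mul_exp_mul_sq_div_two a
      (fun t => ((hasDerivAt_pow 2 t).const_mul (a ^ 2)).const_add a)]
    funext t
    push_cast
    ring
  have d4 : deriv (fun t => (3 * a ^ 2 * t + a ^ 3 * t ^ 3) * rexp (a * t ^ 2 / 2)) =
      fun t => (3 * a ^ 2 + 6 * a ^ 3 * t ^ 2 + a ^ 4 * t ^ 4) * rexp (a * t ^ 2 / 2) := by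
    rw [deriv_mul_exp_mul_sq_div_two a (fun t => ((hasDerivAt_id' t).const_mul (3 * a ^ 2)).fun_add
      ((hasDerivAt_pow 3 t).const_mul (a ^ 3)))]
    funext t
    push_cast
    ring
  rw [d1, d2, d3, d4] at hmgf
  simpa using hmgf.symm

lemma integrable_pow_gaussianReal (m : ℝ) (w : ℝ≥0) (n : ℕ) :
    Integrable (fun x => x ^ n) (gaussianReal m w) :=
  integrable_pow_of_mem_interior_integrableExpSet (by simp) n

end GaussianMoments

namespace MeasureTheory.Measure

variable {α β γ : Type*} [MeasurableSpace α] [MeasurableSpace β] [MeasurableSpace γ]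

lemma map_bind (μ : Measure α) {κ : α → Measure β} (hκ : Measurable κ) {g : β → γ}
    (hg : Measurable g) : (μ.bind κ).map g = μ.bind (fun a => (κ a).map g) := by
  ext s hs
  rw [map_apply hg hs, bind_apply (hg hs) hκ.aemeasurable,
    bind_apply (f := fun a => (κ a).map g) hs ((measurable_map g hg).comp hκ).aemeasurable]
  simp_rw [map_apply hg hs]

lemma integral_bind_of_nonneg {μ : Measure α} {κ : α → Measure β} (hκ : Measurable κ)
    {f : β → ℝ} (hf : Measurable f) (hf0 : 0 ≤ f) (hfκ : ∀ᵐ a ∂μ, Integrable f (κ a))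
    (hfμ : Integrable (fun a => ∫ x, f x ∂κ a) μ) :
    ∫ x, f x ∂μ.bind κ = ∫ a, ∫ x, f x ∂κ a ∂μ := by
  have hlint : ∫⁻ x, ENNReal.ofReal (f x) ∂μ.bind κ
      = ENNReal.ofReal (∫ a, ∫ x, f x ∂κ a ∂μ) := by
    rw [lintegral_bind hκ.aemeasurable hf.ennreal_ofReal.aemeasurable,
      ofReal_integral_eq_lintegral_ofReal hfμ (ae_of_all _ fun a => integral_nonneg hf0)]
    refine lintegral_congr_ae (hfκ.mono fun a ha => ?_)
    exact (ofReal_integral_eq_lintegral_ofReal ha (ae_of_all _ hf0)).symm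
  rw [integral_eq_lintegral_of_nonneg_ae (ae_of_all _ hf0) hf.aestronglyMeasurable, hlint,
    ENNReal.toReal_ofReal (integral_nonneg fun a => integral_nonneg hf0)]

end MeasureTheory.Measure

lemma integral_id_eq_zero_of_map_neg_eq {ν : Measure ℝ} (h : ν.map (fun x => -x) = ν) :
    ∫ x, x ∂ν = 0 := by
  have : ∫ x, x ∂ν = -∫ x, x ∂ν := by
    conv_lhs => rw [← h]
    rw [integral_map measurable_neg.aemeasurable measurable_id'.aestronglyMeasurable, integral_neg]
  linarith

lemma variance_id_eq_zero_iff_exists_eq_dirac {μ : Measure ℝ} [IsProbabilityMeasure μ]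
    (h : MemLp id 2 μ) : Var[id; μ] = 0 ↔ ∃ c, μ = Measure.dirac c := by
  refine ⟨fun h0 => ⟨μ[id], ?_⟩, ?_⟩
  · simpa using (hasLaw_dirac_of_ae_eq (ae_eq_integral_of_variance_eq_zero h h0)).map_eq
  · rintro ⟨c, rfl⟩
    exact variance_dirac c

section GaussianScaleMixture

variable {μ : Measure ℝ} {v : ℝ}

lemma measurable_gaussianReal_mul_toNNReal (v : ℝ) :
    Measurable (fun z : ℝ => gaussianReal 0 (z * v).toNNReal) := by
  fun_prop

lemma map_neg_GSM : (GSM μ v).map (fun x => -x) = GSM μ v := by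
  rw [GSM, Measure.map_bind μ (measurable_gaussianReal_mul_toNNReal v) measurable_neg]
  simp_rw [gaussianReal_map_neg, neg_zero]

lemma integral_id_GSM : ∫ x, x ∂GSM μ v = 0 :=
  integral_id_eq_zero_of_map_neg_eq map_neg_GSM

lemma integral_pow_two_mul_GSM (hz : ∀ᵐ z ∂μ, 0 ≤ z) (hv : 0 ≤ v) (n : ℕ) {c : ℝ}
    (hc : ∀ w : ℝ≥0, ∫ x, x ^ (2 * n) ∂gaussianReal 0 w = c * (w : ℝ) ^ n)
    (hμ : Integrable (fun z => z ^ n) μ) :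
    ∫ x, x ^ (2 * n) ∂GSM μ v = c * v ^ n * ∫ z, z ^ n ∂μ := by
  have hcond : (fun z => ∫ x, x ^ (2 * n) ∂gaussianReal 0 (z * v).toNNReal)
      =ᵐ[μ] fun z => c * v ^ n * z ^ n := by
    filter_upwards [hz] with z hz
    rw [hc, Real.coe_toNNReal _ (mul_nonneg hz hv)]
    ring
  rw [GSM, Measure.integral_bind_of_nonneg (measurable_gaussianReal_mul_toNNReal v)
      (measurable_id'.pow_const _) (fun x => by simp [pow_mul, sq_nonneg, pow_nonneg])
      (ae_of_all _ fun z => integrable_pow_gaussianReal _ _ _)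
      ((hμ.const_mul (c * v ^ n)).congr hcond.symm),
    integral_congr_ae hcond, integral_const_mul]

lemma variance_id_GSM (hz : ∀ᵐ z ∂μ, 0 ≤ z) (hv : 0 ≤ v) (hμ : Integrable (fun z => z) μ) :
    Var[id; GSM μ v] = v * ∫ z, z ∂μ := by
  have h := integral_pow_two_mul_GSM hz hv 1 (c := 1)
    (fun w => by simpa using integral_sq_gaussianReal_zero w) (by simpa using hμ)
  rw [variance_of_integral_eq_zero measurable_id.aemeasurable integral_id_GSM]
  simpa using h

lemma centralMoment_id_four_GSM (hz : ∀ᵐ z ∂μ, 0 ≤ z) (hv : 0 ≤ v)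
    (hμ : Integrable (fun z => z ^ 2) μ) :
    centralMoment id 4 (GSM μ v) = 3 * v ^ 2 * ∫ z, z ^ 2 ∂μ := by
  have h := integral_pow_two_mul_GSM hz hv 2 integral_pow_four_gaussianReal_zero hμ
  simpa [centralMoment, integral_id_GSM] using h

lemma kurt_GSM [IsProbabilityMeasure μ] (hz : ∀ᵐ z ∂μ, 0 ≤ z) (hv : 0 < v)
    (hμ : Integrable (fun z => z ^ 2) μ) (hmean : ∫ z, z ∂μ ≠ 0) :
    kurt (GSM μ v) = 3 * Var[id; μ] / (∫ z, z ∂μ) ^ 2 := by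
  have hL2 : MemLp id 2 μ :=
    (memLp_two_iff_integrable_sq measurable_id.aestronglyMeasurable).mpr hμ
  rw [kurt, centralMoment_id_four_GSM hz hv.le hμ,
    variance_id_GSM hz hv.le (hL2.integrable one_le_two), variance_eq_sub hL2]
  simp only [Pi.pow_apply, id_eq]
  field_simp

end GaussianScaleMixture

/-- Gaussian scale mixtures are never platykurtic: the excess kurtosis of `GSM(μ, v)` is
nonnegative, and it is zero if and only if the mixing distribution `μ` is a Dirac point
mass (equivalently, the variance of `μ` is zero). -/
theorem gsm_kurtosis_nonneg_and_zero_iff_dirac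
    (μ : Measure ℝ) [IsProbabilityMeasure μ]
    (hpos : ∀ᵐ z ∂μ, 0 < z)
    (hmom : Integrable (fun z => z ^ 2) μ)
    (hmean : 0 < ∫ z, z ∂μ)
    (v : ℝ) (hv : 0 < v) :
    0 ≤ kurt (GSM μ v) ∧
    (kurt (GSM μ v) = 0 ↔ ∃ c : ℝ, μ = Measure.dirac c) ∧
    (kurt (GSM μ v) = 0 ↔ variance id μ = 0) := by
  have hkurt := kurt_GSM (hpos.mono fun _ hz => hz.le) hv hmom hmean.ne'
  have hzero : kurt (GSM μ v) = 0 ↔ variance id μ = 0 := by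
    rw [hkurt]
    simp [hmean.ne']
  refine ⟨?_, hzero.trans (variance_id_eq_zero_iff_exists_eq_dirac ?_), hzero⟩
  · rw [hkurt]
    have := variance_nonneg id μ
    positivity
  · exact (memLp_two_iff_integrable_sq measurable_id.aestronglyMeasurable).mpr hmom
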